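/- Let Z ≥ 2 be an integer and consider the MBSP instance given by the DAG G'(Z) with P = 5 processors, g = 0, L = 0, and cache capacity r = Σ_{v∈V} μ(v). Then: (a) the minimum synchronous cost over all valid schedules equals 4Z − 2; (b) there exists a valid schedule with synchronous cost 4Z − 2 whose asynchronous cost is at least 4Z − 2; (c) there exists a valid schedule with asynchronous cost at most 3Z − 1. -/

import Mathlib

/-!
With `g = L = 0` the synchronous cost of a schedule is at least the sum, over any set of distinct
supersteps, of the largest compute load of a processor in each of them. The sink `u₃` needs both
`u₁` and `u₂`: either one processor computes all three in a single superstep (load `4Z − 2`), or one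
of `u₁, u₂` was computed in an earlier superstep (loads `Z − 1`, then `2Z`). Likewise the sink `v₂`
needs `v₁`: either loads `2Z` and then `Z − 1` in a later superstep, or load `3Z − 1` at once.
Any way of fitting these loads into supersteps costs at least `4Z − 2`, and recomputing the shared
parents on every processor that needs them attains this in one superstep. Asynchronously,
a processor that loads `u₁`, `u₂` or `v₁` only waits for that value itself, so sharing them through
slow memory lets every sink be finished by time `3Z − 1`.
-/

namespace MBSP

/-- A transition (pebbling move) of a single processor. -/
inductive Op (ν : Type) where
  | load : ν → Op ν
  | save : ν → Op ν
  | compute : ν → Op ν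
  | delete : ν → Op ν
deriving DecidableEq

/-- An MBSP instance: a DAG with compute weights `ω`, memory weights `μ`,
`P` processors, cache capacity `r`, communication cost `g` and synchronization cost `L`. -/
structure Inst (ν : Type) where
  edge : ν → ν → Prop
  ω : ν → ℝ
  μ : ν → ℝ
  P : ℕ
  r : ℝ
  g : ℝ
  L : ℝ

variable {ν : Type} [DecidableEq ν]

def isSource (I : Inst ν) (v : ν) : Prop := ¬ ∃ u, I.edge u v

def isSink (I : Inst ν) (v : ν) : Prop := ¬ ∃ u, I.edge v u

def Acyclic (I : Inst ν) : Prop := ∀ v, ¬ Relation.TransGen I.edge v v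

def opCost (I : Inst ν) : Op ν → ℝ
  | .load v => I.μ v * I.g
  | .save v => I.μ v * I.g
  | .compute v => I.ω v
  | .delete _ => 0

def applyOp (R B : Finset ν) : Op ν → Finset ν × Finset ν
  | .load v => (insert v R, B)
  | .save v => (R, insert v B)
  | .compute v => (insert v R, B)
  | .delete v => (R.erase v, B)

def opOK (I : Inst ν) (R B : Finset ν) : Op ν → Prop
  | .load v => v ∈ B
  | .save v => v ∈ R
  | .compute v => (∃ u, I.edge u v) ∧ ∀ u, I.edge u v → u ∈ R
  | .delete _ => True

/-- The memory bound for a cache content `R`. -/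
def memOK (I : Inst ν) (R : Finset ν) : Prop := ∑ v ∈ R, I.μ v ≤ I.r

/-- Run a sequence of transitions of one processor on a pair (cache, slow memory). -/
def run (R B : Finset ν) : List (Op ν) → Finset ν × Finset ν
  | [] => (R, B)
  | op :: rest => run (applyOp R B op).1 (applyOp R B op).2 rest

/-- Validity of a sequence of transitions of one processor: every precondition holds
when the transition is applied and the memory bound holds throughout. -/
def seqValid (I : Inst ν) (R B : Finset ν) : List (Op ν) → Prop
  | [] => True
  | op :: rest => opOK I R B op ∧ memOK I (applyOp R B op).1 ∧
      seqValid I (applyOp R B op).1 (applyOp R B op).2 rest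

/-- A superstep: for every processor, a compute phase (computes and deletes),
then a save phase, a delete phase and a load phase. -/
structure Superstep (ν : Type) (P : ℕ) where
  comp : Fin P → List (Op ν)
  save : Fin P → List ν
  del : Fin P → List ν
  load : Fin P → List ν

structure Config (ν : Type) (P : ℕ) where
  R : Fin P → Finset ν
  B : Finset ν

abbrev Schedule (ν : Type) (P : ℕ) := List (Superstep ν P)

variable {P : ℕ}

def compOnly (l : List (Op ν)) : Prop :=
  ∀ op ∈ l, (∃ v, op = Op.compute v) ∨ (∃ v, op = Op.delete v)

def afterComp (c : Config ν P) (S : Superstep ν P) (p : Fin P) : Finset ν :=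
  (run (c.R p) c.B (S.comp p)).1

/-- The shared slow memory after the save phases of all processors. -/
def newB (c : Config ν P) (S : Superstep ν P) : Finset ν :=
  c.B ∪ Finset.univ.biUnion (fun p => (S.save p).toFinset)

def afterDel (c : Config ν P) (S : Superstep ν P) (p : Fin P) : Finset ν :=
  (S.del p).foldl Finset.erase (afterComp c S p)

def afterLoad (c : Config ν P) (S : Superstep ν P) (p : Fin P) : Finset ν :=
  afterDel c S p ∪ (S.load p).toFinset

/-- The configuration reached after executing a superstep. -/
def stepConfig (c : Config ν P) (S : Superstep ν P) : Config ν P :=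
  ⟨fun p => afterLoad c S p, newB c S⟩

/-- Validity of a superstep at a configuration. -/
def ssValid (I : Inst ν) (c : Config ν I.P) (S : Superstep ν I.P) : Prop :=
  (∀ p, compOnly (S.comp p)) ∧
  (∀ p, seqValid I (c.R p) c.B (S.comp p)) ∧
  (∀ p, ∀ v ∈ S.save p, v ∈ afterComp c S p) ∧
  (∀ p, ∀ v ∈ S.load p, v ∈ newB c S) ∧
  (∀ p, memOK I (afterLoad c S p))

def runSched (c : Config ν P) : Schedule ν P → Config ν P
  | [] => c
  | S :: rest => runSched (stepConfig c S) rest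

def schedValidFrom (I : Inst ν) (c : Config ν I.P) : Schedule ν I.P → Prop
  | [] => True
  | S :: rest => ssValid I c S ∧ schedValidFrom I (stepConfig c S) rest

/-- `B` is exactly the set of sources of the DAG. -/
def initB (I : Inst ν) (B : Finset ν) : Prop := ∀ v, v ∈ B ↔ isSource I v

/-- A valid MBSP schedule: starts with empty caches and the sources in slow memory,
every transition is legal and the memory bound holds throughout, and at the end
every sink is in slow memory. -/
def Valid (I : Inst ν) (sched : Schedule ν I.P) : Prop :=
  ∃ B0 : Finset ν, initB I B0 ∧
    schedValidFrom I ⟨fun _ => ∅, B0⟩ sched ∧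
    ∀ v, isSink I v → v ∈ (runSched (⟨fun _ => ∅, B0⟩ : Config ν I.P) sched).B

def listCost (I : Inst ν) (l : List (Op ν)) : ℝ := (l.map (opCost I)).sum

def ioCost (I : Inst ν) (l : List ν) : ℝ := (l.map (fun v => I.μ v * I.g)).sum

/-- The synchronous cost of a superstep. -/
noncomputable def ssCost (I : Inst ν) (S : Superstep ν I.P) : ℝ :=
  (⨆ p : Fin I.P, listCost I (S.comp p)) + (⨆ p : Fin I.P, ioCost I (S.save p)) +
    (⨆ p : Fin I.P, ioCost I (S.load p)) + I.L

/-- The synchronous cost of a schedule. -/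
noncomputable def syncCost (I : Inst ν) (sched : Schedule ν I.P) : ℝ :=
  (sched.map (ssCost I)).sum

/-- Finishing times of the saves in a save phase starting at time `t`. -/
def saveFinishes (I : Inst ν) : ℝ → List ν → List (ν × ℝ)
  | _, [] => []
  | t, v :: rest => (v, t + I.μ v * I.g) :: saveFinishes I (t + I.μ v * I.g) rest

def minSaveTime (entries : List (ν × ℝ)) (v : ν) : Option ℝ :=
  ((entries.filter (fun e => e.1 == v)).map Prod.snd).min?

/-- Finishing time of a load phase: each load waits for the value to be available
in slow memory (time `Γ v`). -/
def loadFold (I : Inst ν) (Γ : ν → Option ℝ) : ℝ → List ν → ℝ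
  | t, [] => t
  | t, v :: rest => loadFold I Γ (max t ((Γ v).getD 0) + I.μ v * I.g) rest

/-- One superstep of the asynchronous execution: updates the finishing time of
every processor and the availability times `Γ` of the values in slow memory. -/
def asyncSS (I : Inst ν) (S : Superstep ν I.P)
    (st : (Fin I.P → ℝ) × (ν → Option ℝ)) : (Fin I.P → ℝ) × (ν → Option ℝ) :=
  let t1 : Fin I.P → ℝ := fun p => st.1 p + listCost I (S.comp p)
  let entries : List (ν × ℝ) :=
    ((List.finRange I.P).map (fun p => saveFinishes I (t1 p) (S.save p))).flatten
  let Γ' : ν → Option ℝ := fun v => (st.2 v).orElse (fun _ => minSaveTime entries v)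
  let t2 : Fin I.P → ℝ := fun p => t1 p + ioCost I (S.save p)
  (fun p => loadFold I Γ' (t2 p) (S.load p), Γ')

def asyncRun (I : Inst ν) (st : (Fin I.P → ℝ) × (ν → Option ℝ)) :
    Schedule ν I.P → (Fin I.P → ℝ) × (ν → Option ℝ)
  | [] => st
  | S :: rest => asyncRun I (asyncSS I S st) rest

/-- The asynchronous cost (makespan) of a schedule. -/
noncomputable def asyncCost (I : Inst ν) (sched : Schedule ν I.P) : ℝ :=
  ⨆ p : Fin I.P, (asyncRun I (fun _ => (0 : ℝ), fun _ => none) sched).1 p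

end MBSP

namespace MBSP

/-- Nodes of the construction `G'(Z)`. -/
inductive G2Node where
  | s | u1 | u2 | u3 | u4 | v1 | v2 | v3 | v4 | w
deriving DecidableEq

instance : Fintype G2Node where
  elems := {.s, .u1, .u2, .u3, .u4, .v1, .v2, .v3, .v4, .w}
  complete := by intro x; cases x <;> simp

/-- Edges of `G'(Z)`: `u1, u2 → u3, u4`; `v1 → v2, v3, v4`; `s → u1, u2, v1, w`. -/
def g2Edge : G2Node → G2Node → Prop
  | .u1, .u3 => True
  | .u1, .u4 => True
  | .u2, .u3 => True
  | .u2, .u4 => True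
  | .v1, .v2 => True
  | .v1, .v3 => True
  | .v1, .v4 => True
  | .s, .u1 => True
  | .s, .u2 => True
  | .s, .v1 => True
  | .s, .w => True
  | _, _ => False

/-- Compute weights of `G'(Z)`. -/
def g2Omega (Z : ℕ) : G2Node → ℝ
  | .s => 0
  | .u1 => (Z : ℝ) - 1
  | .u2 => (Z : ℝ) - 1
  | .u3 => 2 * (Z : ℝ)
  | .u4 => 2 * (Z : ℝ)
  | .v1 => 2 * (Z : ℝ)
  | .v2 => (Z : ℝ) - 1
  | .v3 => (Z : ℝ) - 1
  | .v4 => (Z : ℝ) - 1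
  | .w => (Z : ℝ) - 1

/-- The MBSP instance on `G'(Z)` with `P = 5` processors, `g = 0`, `L = 0`,
unit memory weights and effectively unbounded cache `r = Σ_v μ(v)`. -/
def g2Inst (Z : ℕ) : Inst G2Node where
  edge := g2Edge
  ω := g2Omega Z
  μ := fun _ => 1
  P := 5
  r := ∑ _v : G2Node, (1 : ℝ)
  g := 0
  L := 0

section Execution

variable {ν : Type} {P : ℕ}

def Config.support (c : Config ν P) : Set ν := (⋃ p, ↑(c.R p)) ∪ ↑c.B

def computedIn (S : Superstep ν P) : Set ν := {v | ∃ p, Op.compute v ∈ S.comp p}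

def Computes (sched : Schedule ν P) (t : ℕ) (p : Fin P) (v : ν) : Prop :=
  ∃ S ∈ sched[t]?, Op.compute v ∈ S.comp p

@[simp] lemma computes_cons_zero {S : Superstep ν P} {sched : Schedule ν P} {p : Fin P} {v : ν} :
    Computes (S :: sched) 0 p v ↔ Op.compute v ∈ S.comp p := by
  simp [Computes]

@[simp] lemma computes_cons_succ {S : Superstep ν P} {sched : Schedule ν P} {t : ℕ} {p : Fin P}
    {v : ν} : Computes (S :: sched) (t + 1) p v ↔ Computes sched t p v := by
  simp [Computes]

lemma support_initial {I : Inst ν} {B₀ : Finset ν} (hB₀ : initB I B₀) :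
    (⟨fun _ => ∅, B₀⟩ : Config ν I.P).support = {v | isSource I v} := by
  ext v
  simp [Config.support, hB₀ v]

variable [DecidableEq ν]

lemma mem_of_mem_foldl_erase {s : Finset ν} {l : List ν} {v : ν}
    (hv : v ∈ l.foldl Finset.erase s) : v ∈ s := by
  induction l generalizing s with
  | nil => exact hv
  | cons a l ih => exact Finset.mem_of_mem_erase (ih hv)

lemma mem_run_of_compOnly {R B : Finset ν} {l : List (Op ν)} (hl : compOnly l) {v : ν}
    (hv : v ∈ (run R B l).1) : v ∈ R ∨ Op.compute v ∈ l := by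
  induction l generalizing R B with
  | nil => exact Or.inl hv
  | cons op l ih =>
    have hl' : compOnly l := fun o ho => hl o (List.mem_cons_of_mem _ ho)
    rcases hl op List.mem_cons_self with ⟨x, rfl⟩ | ⟨x, rfl⟩
    · rcases ih hl' hv with h | h
      · rcases Finset.mem_insert.1 h with rfl | h <;> simp [*]
      · simp [h]
    · rcases ih hl' hv with h | h
      · exact Or.inl (Finset.mem_of_mem_erase h)
      · simp [h]

lemma parent_mem_of_seqValid {I : Inst ν} {R B : Finset ν} {l : List (Op ν)} (hl : compOnly l)
    (hvalid : seqValid I R B l) {u v : ν} (hv : Op.compute v ∈ l) (huv : I.edge u v) :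
    u ∈ R ∨ Op.compute u ∈ l := by
  induction l generalizing R B with
  | nil => simp at hv
  | cons op l ih =>
    have hl' : compOnly l := fun o ho => hl o (List.mem_cons_of_mem _ ho)
    rcases hl op List.mem_cons_self with ⟨x, rfl⟩ | ⟨x, rfl⟩
    · rcases List.mem_cons.1 hv with hvx | hv
      · cases hvx
        exact Or.inl (hvalid.1.2 u huv)
      · rcases ih hl' hvalid.2.2 hv with h | h
        · rcases Finset.mem_insert.1 h with rfl | h <;> simp [*]
        · simp [h]
    · rcases List.mem_cons.1 hv with hvx | hv
      · cases hvx
      · rcases ih hl' hvalid.2.2 hv with h | h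
        · exact Or.inl (Finset.mem_of_mem_erase h)
        · simp [h]

lemma support_stepConfig_subset {I : Inst ν} {c : Config ν I.P} {S : Superstep ν I.P}
    (hS : ssValid I c S) : (stepConfig c S).support ⊆ c.support ∪ computedIn S := by
  have hcomp : ∀ p, ∀ v ∈ afterComp c S p, v ∈ c.support ∪ computedIn S := by
    intro p v hv
    rcases mem_run_of_compOnly (hS.1 p) hv with h | h
    · exact Or.inl (Or.inl (Set.mem_iUnion.2 ⟨p, h⟩))
    · exact Or.inr ⟨p, h⟩
  have hB : ∀ v ∈ newB c S, v ∈ c.support ∪ computedIn S := by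
    intro v hv
    rcases Finset.mem_union.1 hv with h | h
    · exact Or.inl (Or.inr h)
    · obtain ⟨p, -, hp⟩ := Finset.mem_biUnion.1 h
      exact hcomp p v (hS.2.2.1 p v (List.mem_toFinset.1 hp))
  rintro v (hv | hv)
  · obtain ⟨p, hp⟩ := Set.mem_iUnion.1 hv
    rcases Finset.mem_union.1 hp with h | h
    · exact hcomp p v (mem_of_mem_foldl_erase h)
    · exact hB v (hS.2.2.2.1 p v (List.mem_toFinset.1 h))
  · exact hB v hv

lemma schedValidFrom.mem_runSched_B {I : Inst ν} {c : Config ν I.P} {sched : Schedule ν I.P}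
    (hsched : schedValidFrom I c sched) {v : ν} (hv : v ∈ (runSched c sched).B) :
    v ∈ c.support ∨ ∃ t p, Computes sched t p v := by
  induction sched generalizing c with
  | nil => exact Or.inl (Or.inr hv)
  | cons S sched ih =>
    rcases ih hsched.2 hv with h | ⟨t, p, h⟩
    · rcases support_stepConfig_subset hsched.1 h with h | ⟨p, h⟩
      · exact Or.inl h
      · exact Or.inr ⟨0, p, by simpa using h⟩
    · exact Or.inr ⟨t + 1, p, by simpa using h⟩

lemma schedValidFrom.parent_computes {I : Inst ν} {c : Config ν I.P} {sched : Schedule ν I.P}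
    (hsched : schedValidFrom I c sched) {t : ℕ} {p : Fin I.P} {u v : ν}
    (hv : Computes sched t p v) (huv : I.edge u v) :
    u ∈ c.support ∨ (∃ t' < t, ∃ q, Computes sched t' q u) ∨ Computes sched t p u := by
  induction sched generalizing c t with
  | nil => simp [Computes] at hv
  | cons S sched ih =>
    cases t with
    | zero =>
      rcases parent_mem_of_seqValid (hsched.1.1 p) (hsched.1.2.1 p) (by simpa using hv) huv
        with h | h
      · exact Or.inl (Or.inl (Set.mem_iUnion.2 ⟨p, h⟩))
      · exact Or.inr (Or.inr (by simpa using h))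
    | succ t =>
      rcases ih hsched.2 (by simpa using hv) with h | ⟨t', ht', q, h⟩ | h
      · rcases support_stepConfig_subset hsched.1 h with h | ⟨q, h⟩
        · exact Or.inl h
        · exact Or.inr (Or.inl ⟨0, t.succ_pos, q, by simpa using h⟩)
      · exact Or.inr (Or.inl ⟨t' + 1, by omega, q, by simpa using h⟩)
      · exact Or.inr (Or.inr (by simpa using h))

variable {I : Inst ν} {sched : Schedule ν I.P}

lemma Valid.isSource_or_computes_of_isSink (h : Valid I sched) {v : ν} (hv : isSink I v) :
    isSource I v ∨ ∃ t p, Computes sched t p v := by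
  obtain ⟨B₀, hB₀, hsched, hsinks⟩ := h
  simpa [support_initial hB₀] using hsched.mem_runSched_B (hsinks v hv)

lemma Valid.parent_computes (h : Valid I sched) {t : ℕ} {p : Fin I.P} {u v : ν}
    (hv : Computes sched t p v) (huv : I.edge u v) :
    isSource I u ∨ (∃ t' < t, ∃ q, Computes sched t' q u) ∨ Computes sched t p u := by
  obtain ⟨B₀, hB₀, hsched, -⟩ := h
  simpa [support_initial hB₀] using hsched.parent_computes hv huv

end Execution

section Cost

variable {ν : Type} {I : Inst ν}

lemma opCost_nonneg (hω : ∀ v, 0 ≤ I.ω v) (hμ : ∀ v, 0 ≤ I.μ v) (hg : 0 ≤ I.g) (op : Op ν) :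
    0 ≤ opCost I op := by
  cases op <;> simp only [opCost] <;> first | exact le_rfl | exact hω _ | exact mul_nonneg (hμ _) hg

lemma ioCost_nonneg (hμ : ∀ v, 0 ≤ I.μ v) (hg : 0 ≤ I.g) (l : List ν) : 0 ≤ ioCost I l :=
  List.sum_nonneg (by simpa using fun v _ => mul_nonneg (hμ v) hg)

lemma sum_ω_le_listCost [DecidableEq ν] (hop : ∀ op, 0 ≤ opCost I op) {l : List (Op ν)}
    {A : Finset ν} (hA : ∀ v ∈ A, Op.compute v ∈ l) : ∑ v ∈ A, I.ω v ≤ listCost I l :=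
  calc ∑ v ∈ A, I.ω v = ∑ op ∈ A.image Op.compute, opCost I op := by
        rw [Finset.sum_image fun _ _ _ _ h => Op.compute.inj h]; rfl
    _ ≤ ∑ op ∈ l.toFinset, opCost I op :=
        Finset.sum_le_sum_of_subset_of_nonneg (by simpa [Finset.image_subset_iff] using hA)
          fun op _ _ => hop op
    _ ≤ ∑ op ∈ l.toFinset, l.count op • opCost I op := by
        refine Finset.sum_le_sum fun op hop' => ?_
        have : 1 ≤ l.count op := List.count_pos_iff.2 (List.mem_toFinset.1 hop')
        simpa using le_smul_of_one_le_left (hop op) this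
    _ = listCost I l := (Finset.sum_list_map_count l _).symm

noncomputable def compCost (I : Inst ν) (S : Superstep ν I.P) : ℝ :=
  ⨆ p, listCost I (S.comp p)

lemma listCost_le_compCost (S : Superstep ν I.P) (p : Fin I.P) :
    listCost I (S.comp p) ≤ compCost I S :=
  le_ciSup (f := fun p => listCost I (S.comp p)) (Set.finite_range _).bddAbove p

lemma compCost_nonneg (hop : ∀ op, 0 ≤ opCost I op) (S : Superstep ν I.P) : 0 ≤ compCost I S :=
  Real.iSup_nonneg fun _ => List.sum_nonneg (by simpa using fun op _ => hop op)

lemma compCost_le_ssCost (hμ : ∀ v, 0 ≤ I.μ v) (hg : 0 ≤ I.g) (hL : 0 ≤ I.L)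
    (S : Superstep ν I.P) : compCost I S ≤ ssCost I S := by
  have hsave := Real.iSup_nonneg fun p => ioCost_nonneg hμ hg (S.save p)
  have hload := Real.iSup_nonneg fun p => ioCost_nonneg hμ hg (S.load p)
  unfold ssCost compCost
  linarith

noncomputable def compCostAt (I : Inst ν) (sched : Schedule ν I.P) (t : ℕ) : ℝ :=
  (sched.map (compCost I)).getD t 0

lemma sum_getD_le_sum {l : List ℝ} (hl : ∀ x ∈ l, 0 ≤ x) (T : Finset ℕ) :
    ∑ t ∈ T, l.getD t 0 ≤ l.sum := by
  have hnonneg : ∀ t, 0 ≤ l.getD t 0 := fun t => by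
    rw [List.getD_eq_getElem?_getD]
    cases h : l[t]? with
    | none => exact le_rfl
    | some x => exact hl x (List.mem_of_getElem? h)
  calc ∑ t ∈ T, l.getD t 0 ≤ ∑ t ∈ T ∪ Finset.range l.length, l.getD t 0 :=
        Finset.sum_le_sum_of_subset_of_nonneg Finset.subset_union_left fun t _ _ => hnonneg t
    _ = ∑ t ∈ Finset.range l.length, l.getD t 0 := by
        refine (Finset.sum_subset Finset.subset_union_right fun t _ ht => ?_).symm
        exact List.getD_eq_default _ _ (by simpa using ht)
    _ = l.sum := by
        rw [Finset.sum_range]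
        simp

lemma sum_compCostAt_le_syncCost (hω : ∀ v, 0 ≤ I.ω v) (hμ : ∀ v, 0 ≤ I.μ v) (hg : 0 ≤ I.g)
    (hL : 0 ≤ I.L) (sched : Schedule ν I.P) (T : Finset ℕ) :
    ∑ t ∈ T, compCostAt I sched t ≤ syncCost I sched :=
  calc ∑ t ∈ T, compCostAt I sched t ≤ (sched.map (compCost I)).sum :=
        sum_getD_le_sum (by simpa using fun S _ => compCost_nonneg (opCost_nonneg hω hμ hg) S) T
    _ ≤ syncCost I sched := List.sum_le_sum fun S _ => compCost_le_ssCost hμ hg hL S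

lemma sum_ω_le_compCostAt [DecidableEq ν] (hop : ∀ op, 0 ≤ opCost I op)
    {sched : Schedule ν I.P} {t : ℕ} {p : Fin I.P} {A : Finset ν}
    (hA : ∀ v ∈ A, Computes sched t p v) : ∑ v ∈ A, I.ω v ≤ compCostAt I sched t := by
  rw [compCostAt, List.getD_eq_getElem?_getD, List.getElem?_map]
  cases hS : sched[t]? with
  | none =>
    have : A = ∅ := Finset.eq_empty_of_forall_notMem fun v hv => by
      simpa [Computes, hS] using hA v hv
    simp [this]
  | some S =>
    exact (sum_ω_le_listCost hop fun v hv => by simpa [Computes, hS] using hA v hv).trans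
      (listCost_le_compCost S p)

end Cost

/-- `opOK` depends on the instance only through its edge relation; stating it for the relation
lets `decide` check concrete schedules whatever the (real) weights are. -/
def Enabled {ν : Type} (edge : ν → ν → Prop) (R B : Finset ν) : Op ν → Prop
  | .load v => v ∈ B
  | .save v => v ∈ R
  | .compute v => (∃ u, edge u v) ∧ ∀ u, edge u v → u ∈ R
  | .delete _ => True

section Runnable

variable {ν : Type} [DecidableEq ν] {P : ℕ}

def Runnable (edge : ν → ν → Prop) (R B : Finset ν) : List (Op ν) → Prop
  | [] => True
  | op :: l => Enabled edge R B op ∧ Runnable edge (applyOp R B op).1 (applyOp R B op).2 l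

def StepRunnable (edge : ν → ν → Prop) (c : Config ν P) (S : Superstep ν P) : Prop :=
  (∀ p, compOnly (S.comp p)) ∧ (∀ p, Runnable edge (c.R p) c.B (S.comp p)) ∧
    (∀ p, ∀ v ∈ S.save p, v ∈ afterComp c S p) ∧ (∀ p, ∀ v ∈ S.load p, v ∈ newB c S)

def SchedRunnable (edge : ν → ν → Prop) (c : Config ν P) : Schedule ν P → Prop
  | [] => True
  | S :: sched => StepRunnable edge c S ∧ SchedRunnable edge (stepConfig c S) sched

lemma seqValid_of_runnable {I : Inst ν} (hmem : ∀ R, memOK I R) {R B : Finset ν}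
    {l : List (Op ν)} (h : Runnable I.edge R B l) : seqValid I R B l := by
  induction l generalizing R B with
  | nil => trivial
  | cons op l ih => exact ⟨by cases op <;> exact h.1, hmem _, ih h.2⟩

lemma schedValidFrom_of_schedRunnable {I : Inst ν} (hmem : ∀ R, memOK I R) {c : Config ν I.P}
    {sched : Schedule ν I.P} (h : SchedRunnable I.edge c sched) : schedValidFrom I c sched := by
  induction sched generalizing c with
  | nil => trivial
  | cons S sched ih =>
    obtain ⟨⟨hcomp, hrun, hsave, hload⟩, hrest⟩ := h
    exact ⟨⟨hcomp, fun p => seqValid_of_runnable hmem (hrun p), hsave, hload, fun _ => hmem _⟩,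
      ih hrest⟩

variable [Fintype ν] {edge : ν → ν → Prop} [DecidableRel edge]

instance (R B : Finset ν) (op : Op ν) : Decidable (Enabled edge R B op) := by
  cases op <;> unfold Enabled <;> infer_instance

instance Runnable.decidable :
    (R B : Finset ν) → (l : List (Op ν)) → Decidable (Runnable edge R B l)
  | _, _, [] => isTrue trivial
  | R, B, op :: l =>
    haveI := Runnable.decidable (applyOp R B op).1 (applyOp R B op).2 l
    inferInstanceAs (Decidable (_ ∧ _))

instance (l : List (Op ν)) : Decidable (compOnly l) := by
  unfold compOnly; infer_instance

instance (c : Config ν P) (S : Superstep ν P) : Decidable (StepRunnable edge c S) := by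
  unfold StepRunnable; infer_instance

instance SchedRunnable.decidable :
    (c : Config ν P) → (sched : Schedule ν P) → Decidable (SchedRunnable edge c sched)
  | _, [] => isTrue trivial
  | c, S :: sched =>
    haveI := SchedRunnable.decidable (stepConfig c S) sched
    inferInstanceAs (Decidable (_ ∧ _))

end Runnable

lemma four_mul_sub_two_le_of_loads {M : ℕ → ℝ} {C z : ℝ} (hz : 0 ≤ z)
    (hM : ∀ T : Finset ℕ, ∑ t ∈ T, M t ≤ C)
    (hu : (∃ a, 4 * z - 2 ≤ M a) ∨ ∃ a b, b < a ∧ 2 * z ≤ M a ∧ z - 1 ≤ M b)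
    (hv : (∃ c d, c < d ∧ 2 * z ≤ M c ∧ z - 1 ≤ M d) ∨ ∃ d, 3 * z - 1 ≤ M d) :
    4 * z - 2 ≤ C := by
  have pair : ∀ a b, a ≠ b → M a + M b ≤ C := fun a b hab => by
    simpa [Finset.sum_pair hab] using hM {a, b}
  have triple : ∀ a b c, a ≠ b → a ≠ c → b ≠ c → M a + M b + M c ≤ C :=
    fun a b c hab hac hbc => by simpa [Finset.sum_insert, hab, hac, hbc, add_assoc] using hM {a, b, c}
  rcases hu with ⟨a, ha⟩ | ⟨a, b, hba, ha, hb⟩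
  · exact ha.trans (by simpa using hM {a})
  rcases hv with ⟨c, d, hcd, hc, hd⟩ | ⟨d, hd⟩
  · by_cases hcb : c = b
    · subst hcb; linarith [pair a c hba.ne']
    by_cases hca : c = a
    · subst hca; linarith [triple b c d hba.ne (by omega) (by omega)]
    · linarith [triple b a c hba.ne (Ne.symm hcb) (Ne.symm hca)]
  · by_cases hda : d = a
    · subst hda; linarith [pair d b hba.ne']
    by_cases hdb : d = b
    · subst hdb; linarith [pair a d hba.ne']
    · linarith [triple b a d hba.ne (Ne.symm hdb) (Ne.symm hda)]

section G2

open G2Node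

instance : DecidableRel g2Edge := fun a b => by
  cases a <;> cases b <;> simp only [g2Edge] <;> infer_instance

variable {Z : ℕ}

lemma isSource_g2Inst {v : G2Node} : isSource (g2Inst Z) v ↔ v = s := by
  revert v
  show ∀ v, (¬ ∃ u, g2Edge u v) ↔ v = s
  decide

lemma isSink_g2Inst {v : G2Node} :
    isSink (g2Inst Z) v ↔ v ∈ ({u3, u4, v2, v3, v4, w} : Finset G2Node) := by
  revert v
  show ∀ v, (¬ ∃ u, g2Edge v u) ↔ _
  decide

lemma g2Inst_ω_nonneg (hZ : 1 ≤ Z) (v : G2Node) : 0 ≤ (g2Inst Z).ω v := by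
  have : (1 : ℝ) ≤ Z := by exact_mod_cast hZ
  cases v <;> simp only [g2Inst, g2Omega] <;> linarith

lemma g2Inst_opCost_nonneg (hZ : 1 ≤ Z) (op : Op G2Node) : 0 ≤ opCost (g2Inst Z) op :=
  opCost_nonneg (g2Inst_ω_nonneg hZ) (fun _ => zero_le_one) le_rfl op

lemma g2Inst_memOK (R : Finset G2Node) : memOK (g2Inst Z) R := by
  simpa [memOK, g2Inst] using Finset.card_le_univ R

variable {sched : Schedule G2Node 5}

lemma Valid.g2Inst_loads_of_u3 (hZ : 1 ≤ Z) (h : Valid (g2Inst Z) sched) :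
    (∃ a, 4 * (Z : ℝ) - 2 ≤ compCostAt (g2Inst Z) sched a) ∨
      ∃ a b, b < a ∧ 2 * (Z : ℝ) ≤ compCostAt (g2Inst Z) sched a ∧
        (Z : ℝ) - 1 ≤ compCostAt (g2Inst Z) sched b := by
  have hop := g2Inst_opCost_nonneg hZ
  obtain ⟨a, p, ha⟩ := (h.isSource_or_computes_of_isSink (v := u3)
    (isSink_g2Inst.2 (by simp))).resolve_left (by simp [isSource_g2Inst])
  have hu3 : 2 * (Z : ℝ) ≤ compCostAt (g2Inst Z) sched a := by
    simpa [g2Inst, g2Omega] using sum_ω_le_compCostAt hop (A := {u3}) (by simpa using ha)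
  have parent : ∀ x ∈ ({u1, u2} : Finset G2Node), Computes sched a p x ∨
      ∃ b < a, (Z : ℝ) - 1 ≤ compCostAt (g2Inst Z) sched b := by
    intro x hx
    have hedge : (g2Inst Z).edge x u3 := by simp at hx; rcases hx with rfl | rfl <;> trivial
    rcases h.parent_computes ha hedge with hs | ⟨b, hb, q, hx'⟩ | hx'
    · simp [isSource_g2Inst] at hs; simp [hs] at hx
    · refine Or.inr ⟨b, hb, ?_⟩
      have := sum_ω_le_compCostAt hop (A := {x}) (by simpa using hx')
      simp at hx; rcases hx with rfl | rfl <;> simpa [g2Inst, g2Omega] using this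
    · exact Or.inl hx'
  rcases parent u1 (by simp) with h1 | ⟨b, hb, hMb⟩
  · rcases parent u2 (by simp) with h2 | ⟨b, hb, hMb⟩
    · have hall : ∀ x ∈ ({u1, u2, u3} : Finset G2Node), Computes sched a p x := by
        simp only [Finset.mem_insert, Finset.mem_singleton]
        rintro x (rfl | rfl | rfl) <;> assumption
      refine Or.inl ⟨a, le_of_eq_of_le ?_ (sum_ω_le_compCostAt hop hall)⟩
      simp [g2Inst, g2Omega]; ring
    · exact Or.inr ⟨a, b, hb, hu3, hMb⟩
  · exact Or.inr ⟨a, b, hb, hu3, hMb⟩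

lemma Valid.g2Inst_loads_of_v2 (hZ : 1 ≤ Z) (h : Valid (g2Inst Z) sched) :
    (∃ c d, c < d ∧ 2 * (Z : ℝ) ≤ compCostAt (g2Inst Z) sched c ∧
        (Z : ℝ) - 1 ≤ compCostAt (g2Inst Z) sched d) ∨
      ∃ d, 3 * (Z : ℝ) - 1 ≤ compCostAt (g2Inst Z) sched d := by
  have hop := g2Inst_opCost_nonneg hZ
  obtain ⟨d, p, hd⟩ := (h.isSource_or_computes_of_isSink (v := v2)
    (isSink_g2Inst.2 (by simp))).resolve_left (by simp [isSource_g2Inst])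
  rcases h.parent_computes hd (show (g2Inst Z).edge v1 v2 from trivial)
    with hs | ⟨c, hc, q, hc'⟩ | hd'
  · simp [isSource_g2Inst] at hs
  · refine Or.inl ⟨c, d, hc, ?_, ?_⟩
    · simpa [g2Inst, g2Omega] using sum_ω_le_compCostAt hop (A := {v1}) (by simpa using hc')
    · simpa [g2Inst, g2Omega] using sum_ω_le_compCostAt hop (A := {v2}) (by simpa using hd)
  · refine Or.inr ⟨d, le_of_eq_of_le ?_
      (sum_ω_le_compCostAt hop (p := p) (A := {v1, v2}) (by simp [hd, hd']))⟩
    simp [g2Inst, g2Omega]; ring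

lemma Valid.g2Inst_syncCost_ge (hZ : 1 ≤ Z) (h : Valid (g2Inst Z) sched) :
    4 * (Z : ℝ) - 2 ≤ syncCost (g2Inst Z) sched :=
  four_mul_sub_two_le_of_loads (Nat.cast_nonneg Z)
    (sum_compCostAt_le_syncCost (g2Inst_ω_nonneg hZ) (fun _ => zero_le_one) le_rfl le_rfl sched)
    (h.g2Inst_loads_of_u3 hZ) (h.g2Inst_loads_of_v2 hZ)

end G2

section Schedules

open G2Node Op

variable {Z : ℕ}

def g2InitConfig : Config G2Node 5 := ⟨fun _ => ∅, {s}⟩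

lemma valid_g2Inst_of_schedRunnable {sched : Schedule G2Node 5}
    (h : SchedRunnable g2Edge g2InitConfig sched)
    (hsinks : ∀ v ∈ ({u3, u4, v2, v3, v4, w} : Finset G2Node),
      v ∈ (runSched g2InitConfig sched).B) :
    Valid (g2Inst Z) sched :=
  ⟨{s}, fun _ => by simp [isSource_g2Inst], schedValidFrom_of_schedRunnable g2Inst_memOK h,
    fun v hv => hsinks v (isSink_g2Inst.1 hv)⟩

def loadSource : Superstep G2Node 5 :=
  ⟨fun _ => [], fun _ => [], fun _ => [], fun _ => [s]⟩

def syncOptimalStep : Superstep G2Node 5 :=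
  ⟨![[compute u1, compute u2, compute u3],
     [compute u1, compute u2, compute u4],
     [compute v1, compute v2, compute w],
     [compute v1, compute v3],
     [compute v1, compute v4]],
   ![[u3], [u4], [v2, w], [v3], [v4]],
   fun _ => [], fun _ => []⟩

def syncOptimal : Schedule G2Node 5 := [loadSource, syncOptimalStep]

lemma syncOptimal_valid : Valid (g2Inst Z) syncOptimal :=
  valid_g2Inst_of_schedRunnable (by decide) (by decide)

lemma syncOptimal_syncCost (hZ : 1 ≤ Z) :
    syncCost (g2Inst Z) syncOptimal = 4 * (Z : ℝ) - 2 := by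
  refine le_antisymm ?_ (syncOptimal_valid.g2Inst_syncCost_ge hZ)
  have hZ' : (1 : ℝ) ≤ Z := by exact_mod_cast hZ
  simp [syncCost, syncOptimal, ssCost, loadSource, syncOptimalStep, listCost, ioCost, g2Inst]
  refine Real.iSup_le (fun p => ?_) (by linarith)
  fin_cases p <;> simp [opCost, g2Omega] <;> linarith

lemma syncOptimal_asyncCost : 4 * (Z : ℝ) - 2 ≤ asyncCost (g2Inst Z) syncOptimal := by
  refine le_of_eq_of_le ?_ (le_ciSup (Set.finite_range _).bddAbove (0 : Fin 5))
  simp [syncOptimal, asyncRun, asyncSS, loadSource, syncOptimalStep, loadFold, saveFinishes,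
    minSaveTime, ioCost, listCost, opCost, g2Inst, g2Omega, List.finRange]
  ring

def fastAsyncStep₁ : Superstep G2Node 5 :=
  ⟨![[compute u1], [compute u2], [compute v1], [compute w], []],
    ![[u1], [u2], [v1], [w], []],
    fun _ => [],
    ![[u2], [u1], [], [v1], [v1]]⟩

def fastAsyncStep₂ : Superstep G2Node 5 :=
  ⟨![[compute u3], [compute u4], [compute v2], [compute v3], [compute v4]],
    ![[u3], [u4], [v2], [v3], [v4]],
    fun _ => [], fun _ => []⟩

def fastAsync : Schedule G2Node 5 := [loadSource, fastAsyncStep₁, fastAsyncStep₂]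

lemma fastAsync_valid : Valid (g2Inst Z) fastAsync :=
  valid_g2Inst_of_schedRunnable (by decide) (by decide)

lemma fastAsync_asyncCost (hZ : 1 ≤ Z) : asyncCost (g2Inst Z) fastAsync ≤ 3 * (Z : ℝ) - 1 := by
  have hZ' : (1 : ℝ) ≤ Z := by exact_mod_cast hZ
  -- processor 3 computes `w` by time `Z - 1` and then waits for `v₁`, saved at time `2Z`
  have hwait : max ((Z : ℝ) - 1) (2 * Z) = 2 * Z := max_eq_right (by linarith)
  refine Real.iSup_le (fun p => ?_) (by linarith)
  fin_cases p <;>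
    simp [fastAsync, asyncRun, asyncSS, loadSource, fastAsyncStep₁, fastAsyncStep₂, loadFold,
      saveFinishes, minSaveTime, ioCost, listCost, opCost, g2Inst, g2Omega, List.finRange,
      hwait] <;> linarith

end Schedules

/-- On `G'(Z)` (`Z ≥ 2`) with `P = 5`, `g = L = 0`, unbounded cache:
(a) the minimum synchronous cost over valid schedules equals `4Z − 2`;
(b) some valid schedule of synchronous cost `4Z − 2` has asynchronous cost at least
`4Z − 2`; (c) some valid schedule has asynchronous cost at most `3Z − 1`. -/
theorem statement_9 (Z : ℕ) (hZ : 2 ≤ Z) :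
    sInf {c : ℝ | ∃ sched : Schedule G2Node 5, Valid (g2Inst Z) sched ∧
        syncCost (g2Inst Z) sched = c} = 4 * (Z : ℝ) - 2 ∧
    (∃ sched : Schedule G2Node 5, Valid (g2Inst Z) sched ∧
      syncCost (g2Inst Z) sched = 4 * (Z : ℝ) - 2 ∧
      4 * (Z : ℝ) - 2 ≤ asyncCost (g2Inst Z) sched) ∧
    (∃ sched : Schedule G2Node 5, Valid (g2Inst Z) sched ∧
      asyncCost (g2Inst Z) sched ≤ 3 * (Z : ℝ) - 1) := by
  have hZ₁ : 1 ≤ Z := by omega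
  refine ⟨IsLeast.csInf_eq ⟨⟨syncOptimal, syncOptimal_valid, syncOptimal_syncCost hZ₁⟩, ?_⟩,
    ⟨syncOptimal, syncOptimal_valid, syncOptimal_syncCost hZ₁, syncOptimal_asyncCost⟩,
    ⟨fastAsync, fastAsync_valid, fastAsync_asyncCost hZ₁⟩⟩
  rintro c ⟨sched, hsched, rfl⟩
  exact hsched.g2Inst_syncCost_ge hZ₁

end MBSP
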